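/- Let n ≥ 1, let Q : ℝⁿ → ℝⁿ and A : ℝⁿ → Mat_{n×n}(ℝ) be smooth, and let λ ≠ 0 be a real number. Suppose C : ℝⁿ → Sym_{n×n}(ℝ) is a second-order Killing tensor of ℝⁿ and L : ℝⁿ → ℝⁿ is a smooth vector field such that, for all q and all indices: λ C_{ab} = −½(∂L_a/∂q^b + ∂L_b/∂q^a) − (C_{ca} A^c_b + C_{cb} A^c_a), and ∂(L_b Q^b)/∂q^a = 2λ C_{ab} Q^b − λ² L_a − λ L_b A^b_a. Then along every solution q(t) of q̈^a = −Q^a(q) + A^a_b(q) q̇^b, the quantity J₂(t) = e^{λt} ( λ C_{ab}(q(t)) q̇^a q̇^b + λ L_a(q(t)) q̇^a + L_a(q(t)) Q^a(q(t)) ) is constant in t. -/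

import Mathlib

/-- Spatial partial derivative `∂f/∂q^a` of a function `f : ℝⁿ → ℝ`. -/
noncomputable def dS {n : ℕ} (f : (Fin n → ℝ) → ℝ) (a : Fin n) (q : Fin n → ℝ) : ℝ :=
  deriv (fun s => f (Function.update q a s)) (q a)

section helpers
variable {n : ℕ}

lemma sum1_congr {f g : Fin n → ℝ} (h : ∀ a, f a = g a) :
    ∑ a, f a = ∑ a, g a := Finset.sum_congr rfl fun a _ => h a

lemma sum2_congr {f g : Fin n → Fin n → ℝ} (h : ∀ a b, f a b = g a b) :
    ∑ a, ∑ b, f a b = ∑ a, ∑ b, g a b :=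
  Finset.sum_congr rfl fun a _ => Finset.sum_congr rfl fun b _ => h a b

lemma sw2 (f : Fin n → Fin n → ℝ) : ∑ a, ∑ b, f a b = ∑ a, ∑ b, f b a :=
  Finset.sum_comm

lemma sum3_swap12 (f : Fin n → Fin n → Fin n → ℝ) :
    ∑ a, ∑ b, ∑ c, f a b c = ∑ a, ∑ b, ∑ c, f b a c := Finset.sum_comm

lemma sum3_swap23 (f : Fin n → Fin n → Fin n → ℝ) :
    ∑ a, ∑ b, ∑ c, f a b c = ∑ a, ∑ b, ∑ c, f a c b :=
  sum1_congr fun a => Finset.sum_comm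

lemma split2_add (f g : Fin n → Fin n → ℝ) :
    ∑ a, ∑ b, (f a b + g a b) = (∑ a, ∑ b, f a b) + (∑ a, ∑ b, g a b) := by
  simp [Finset.sum_add_distrib]

lemma const_mul_sum2 (c : ℝ) (f : Fin n → Fin n → ℝ) :
    c * (∑ a, ∑ b, f a b) = ∑ a, ∑ b, c * f a b := by
  rw [Finset.mul_sum]; exact sum1_congr fun a => Finset.mul_sum _ _ _

end helpers

lemma key_algebra {n : ℕ} (lam : ℝ) (Cx Ax DC DL : Fin n → Fin n → ℝ)
    (Lx Qx u G : Fin n → ℝ)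
    (hCsym : ∀ a b, Cx a b = Cx b a)
    (hKill : ∑ a, ∑ b, DC a b * u a * u b = 0)
    (h1 : ∀ a b, lam * Cx a b = -((1/2) * (DL a b + DL b a))
        - ((∑ c, Cx c a * Ax c b) + (∑ c, Cx c b * Ax c a)))
    (hG : ∀ a, G a = 2 * lam * (∑ b, Cx a b * Qx b) - lam ^ 2 * Lx a
        - lam * ∑ b, Lx b * Ax b a) :
    lam * (lam * (∑ a, ∑ b, Cx a b * u a * u b) + lam * (∑ a, Lx a * u a)
        + ∑ a, Lx a * Qx a)
      + (lam * (∑ a, ∑ b, ((DC a b * u a + Cx a b * (-(Qx a) + ∑ c, Ax a c * u c)) * u b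
            + (Cx a b * u a) * (-(Qx b) + ∑ c, Ax b c * u c)))
         + lam * (∑ a, ((∑ c, DL a c * u c) * u a
            + Lx a * (-(Qx a) + ∑ c, Ax a c * u c)))
         + ∑ a, G a * u a) = 0 := by
  set S2 := ∑ a, ∑ b, Cx a b * u a * u b with hS2
  set SL := ∑ a, Lx a * u a with hSL
  set SLQ := ∑ a, Lx a * Qx a with hSLQ
  set SCQ := ∑ a, ∑ b, Cx a b * Qx b * u a with hSCQ
  set SCA := ∑ a, ∑ b, (∑ c, Cx c a * Ax c b) * u a * u b with hSCA
  set SLA := ∑ a, ∑ b, Lx a * Ax a b * u b with hSLA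
  -- ∑∑ C_{ab} Q^a u^b = SCQ
  have eCQ : ∑ a, ∑ b, Cx a b * Qx a * u b = SCQ := by
    rw [sw2]; exact sum2_congr fun a b => by rw [hCsym b a]
  -- triple sums with A equal SCA
  have eCA1 : ∑ a, ∑ b, Cx a b * ((∑ c, Ax a c * u c) * u b) = SCA := by
    have l : ∀ a b : Fin n, Cx a b * ((∑ c, Ax a c * u c) * u b)
        = ∑ c, Cx a b * Ax a c * u c * u b := by
      intro a b; rw [Finset.sum_mul, Finset.mul_sum]
      exact sum1_congr fun c => by ring
    have r : ∀ a b : Fin n, (∑ c, Cx c a * Ax c b) * u a * u b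
        = ∑ c, Cx c a * Ax c b * u a * u b := by
      intro a b; rw [Finset.sum_mul, Finset.sum_mul]
    rw [hSCA]; simp only [l, r]
    rw [sum3_swap12 (fun a b c => Cx a b * Ax a c * u c * u b),
        sum3_swap23 (fun a b c => Cx b a * Ax b c * u c * u a)]
    exact sum2_congr fun a b => sum1_congr fun c => by rw [hCsym c a]; ring
  have eCA2 : ∑ a, ∑ b, Cx a b * ((∑ c, Ax b c * u c) * u a) = SCA := by
    rw [← eCA1, sw2]
    exact sum2_congr fun a b => by rw [hCsym b a]
  -- H1 : derivative of the quadratic part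
  have H1 : ∑ a, ∑ b, ((DC a b * u a + Cx a b * (-(Qx a) + ∑ c, Ax a c * u c)) * u b
      + (Cx a b * u a) * (-(Qx b) + ∑ c, Ax b c * u c))
      = -2 * SCQ + 2 * SCA := by
    have expand : ∀ a b : Fin n,
        ((DC a b * u a + Cx a b * (-(Qx a) + ∑ c, Ax a c * u c)) * u b
          + (Cx a b * u a) * (-(Qx b) + ∑ c, Ax b c * u c))
        = DC a b * u a * u b
          + ((-(Cx a b * Qx a * u b) + Cx a b * ((∑ c, Ax a c * u c) * u b))
          + (-(Cx a b * Qx b * u a) + Cx a b * ((∑ c, Ax b c * u c) * u a))) := by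
      intro a b; ring
    rw [sum2_congr expand, split2_add, split2_add, split2_add, split2_add, hKill]
    have n1 : ∑ a, ∑ b, -(Cx a b * Qx a * u b) = -SCQ := by
      rw [← eCQ]; simp [Finset.sum_neg_distrib]
    have n2 : ∑ a, ∑ b, -(Cx a b * Qx b * u a) = -SCQ := by
      rw [hSCQ]; simp [Finset.sum_neg_distrib]
    rw [n1, n2, eCA1, eCA2]; ring
  -- H2 : derivative of the linear part
  have hDLsum : ∀ a b, DL a b + DL b a
      = -2 * lam * Cx a b - 2 * ((∑ c, Cx c a * Ax c b) + (∑ c, Cx c b * Ax c a)) := by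
    intro a b; have := h1 a b; linarith
  have H2 : ∑ a, ((∑ c, DL a c * u c) * u a
      + Lx a * (-(Qx a) + ∑ c, Ax a c * u c))
      = (-lam * S2 - 2 * SCA) + (-SLQ + SLA) := by
    rw [Finset.sum_add_distrib]
    have part1 : ∑ a, (∑ c, DL a c * u c) * u a = -lam * S2 - 2 * SCA := by
      have T0 : ∑ a, (∑ c, DL a c * u c) * u a
          = ∑ a, ∑ b, DL a b * (u a * u b) := by
        refine sum1_congr fun a => ?_
        rw [Finset.sum_mul]; exact sum1_congr fun c => by ring
      have Tswap : ∑ a, ∑ b, DL a b * (u a * u b)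
          = ∑ a, ∑ b, DL b a * (u a * u b) := by
        rw [sw2]; exact sum2_congr fun a b => by ring
      have T2 : 2 * (∑ a, ∑ b, DL a b * (u a * u b))
          = ∑ a, ∑ b, (DL a b + DL b a) * (u a * u b) := by
        rw [sum2_congr (fun a b => add_mul (DL a b) (DL b a) (u a * u b)),
          split2_add, ← Tswap]; ring
      have T3 : ∑ a, ∑ b, (DL a b + DL b a) * (u a * u b)
          = -2 * lam * S2 - 4 * SCA := by
        rw [sum2_congr (fun a b => by rw [hDLsum a b] :
          ∀ a b, (DL a b + DL b a) * (u a * u b)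
            = (-2 * lam * Cx a b - 2 * ((∑ c, Cx c a * Ax c b) + (∑ c, Cx c b * Ax c a)))
              * (u a * u b))]
        have expand2 : ∀ a b : Fin n,
            (-2 * lam * Cx a b - 2 * ((∑ c, Cx c a * Ax c b) + (∑ c, Cx c b * Ax c a)))
              * (u a * u b)
            = (-2 * lam) * (Cx a b * u a * u b)
              + ((-2) * ((∑ c, Cx c a * Ax c b) * u a * u b)
                + (-2) * ((∑ c, Cx c b * Ax c a) * u a * u b)) := by
          intro a b; ring
        rw [sum2_congr expand2, split2_add, split2_add,
          ← const_mul_sum2 (-2 * lam), ← const_mul_sum2 (-2), ← const_mul_sum2 (-2),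
          ← hS2, ← hSCA]
        have eSCA' : ∑ a, ∑ b, (∑ c, Cx c b * Ax c a) * u a * u b = SCA := by
          rw [hSCA, sw2]; exact sum2_congr fun a b => by ring
        rw [eSCA']; ring
      have := T2.trans T3
      rw [T0]; linarith
    have part2 : ∑ a, Lx a * (-(Qx a) + ∑ c, Ax a c * u c) = -SLQ + SLA := by
      have expand3 : ∀ a : Fin n, Lx a * (-(Qx a) + ∑ c, Ax a c * u c)
          = -(Lx a * Qx a) + ∑ c, Lx a * Ax a c * u c := by
        intro a
        have hm : Lx a * ∑ c, Ax a c * u c = ∑ c, Lx a * Ax a c * u c := by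
          rw [Finset.mul_sum]; exact sum1_congr fun c => (mul_assoc _ _ _).symm
        rw [mul_add, mul_neg, hm]
      rw [sum1_congr expand3, Finset.sum_add_distrib]
      congr 1
      rw [hSLQ]; simp [Finset.sum_neg_distrib]
    rw [part1, part2]
  -- H3 : derivative of the L·Q part
  have H3 : ∑ a, G a * u a = 2 * lam * SCQ - lam ^ 2 * SL - lam * SLA := by
    have hGa : ∀ a, G a * u a
        = 2 * lam * (∑ b, Cx a b * Qx b * u a) - lam ^ 2 * (Lx a * u a)
          - lam * (∑ b, Lx b * Ax b a * u a) := by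
      intro a; rw [hG a,
        show (∑ b, Cx a b * Qx b * u a) = (∑ b, Cx a b * Qx b) * u a from
          (Finset.sum_mul _ _ _).symm,
        show (∑ b, Lx b * Ax b a * u a) = (∑ b, Lx b * Ax b a) * u a from
          (Finset.sum_mul _ _ _).symm]
      ring
    have eLA : ∑ a, ∑ b, Lx b * Ax b a * u a = SLA := by
      rw [hSLA, sw2]
    rw [sum1_congr hGa, Finset.sum_sub_distrib, Finset.sum_sub_distrib,
      ← Finset.mul_sum Finset.univ (fun x => ∑ b, Cx x b * Qx b * u x) (2 * lam),
      ← Finset.mul_sum Finset.univ (fun x => Lx x * u x) (lam ^ 2),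
      ← Finset.mul_sum Finset.univ (fun x => ∑ b, Lx b * Ax b x * u x) lam,
      ← hSCQ, ← hSL, eLA]
  rw [H1, H2, H3]; ring
lemma dS_eq_fderiv {n : ℕ} (f : (Fin n → ℝ) → ℝ) (hf : Differentiable ℝ f)
    (a : Fin n) (x : Fin n → ℝ) :
    dS f a x = fderiv ℝ f x (Pi.single a 1) := by
  have h0 : HasDerivAt (Function.update x a) (Pi.single a (1:ℝ)) (x a) :=
    hasDerivAt_update x a (x a)
  have h1 : HasFDerivAt f (fderiv ℝ f x) (Function.update x a (x a)) := by
    rw [Function.update_eq_self]; exact (hf x).hasFDerivAt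
  have h2 := h1.comp_hasDerivAt (x a) h0
  exact h2.deriv

lemma hasDerivAt_comp_sum {n : ℕ} (f : (Fin n → ℝ) → ℝ) (hf : Differentiable ℝ f)
    (q : ℝ → Fin n → ℝ) (t : ℝ) (v : Fin n → ℝ) (hq : HasDerivAt q v t) :
    HasDerivAt (fun s => f (q s)) (∑ c, dS f c (q t) * v c) t := by
  have h := (hf (q t)).hasFDerivAt.comp_hasDerivAt t hq
  suffices e : ∑ c, dS f c (q t) * v c = fderiv ℝ f (q t) v by rw [e]; exact h
  have hv : v = ∑ c, v c • (Pi.single c (1:ℝ) : Fin n → ℝ) := by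
    conv_lhs => rw [← Finset.univ_sum_single v]
    refine Finset.sum_congr rfl fun c _ => ?_
    ext j
    simp [Pi.single_apply]
  conv_rhs => rw [hv]
  rw [map_sum]
  refine Finset.sum_congr rfl fun c _ => ?_
  rw [dS_eq_fderiv f hf]
  rw [(fderiv ℝ f (q t)).map_smul]
  simp [mul_comm]


/-- A second-order Killing tensor of the Euclidean space `ℝⁿ`: a smooth,
symmetric matrix-valued map `C_{ab}(q)` satisfying the Killing tensor equation
`C_{(ab,c)} = 0` (in Cartesian coordinates). -/
def IsKillingTensor {n : ℕ} (C : (Fin n → ℝ) → Fin n → Fin n → ℝ) : Prop :=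
  (∀ a b, ContDiff ℝ (⊤ : ℕ∞) (fun q => C q a b)) ∧
  (∀ q a b, C q a b = C q b a) ∧
  (∀ q, ∀ a b c : Fin n,
    dS (fun q => C q a b) c q + dS (fun q => C q b c) a q + dS (fun q => C q c a) b q = 0)

/-- The symmetrized Jacobian `L_{(a,b)} = ½(∂L_a/∂q^b + ∂L_b/∂q^a)` of a vector
field `L` on `ℝⁿ`. -/
noncomputable def SymJac {n : ℕ} (L : (Fin n → ℝ) → Fin n → ℝ)
    (q : Fin n → ℝ) (a b : Fin n) : ℝ :=
  (1 / 2) * (dS (fun q => L q a) b q + dS (fun q => L q b) a q)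

/-- The exponential quadratic first integral `J₂` of Theorem 2 (Integral 2):
under the stated geometric conditions, `J₂ = e^{λt}(λ C_{ab} q̇^a q̇^b + λ L_a q̇^a + L_a Q^a)`
is conserved along every solution of `q̈^a = −Q^a(q) + A^a_b(q) q̇^b`. -/
theorem exponential_quadratic_first_integral
    (n : ℕ) (hn : 1 ≤ n)
    (Q : (Fin n → ℝ) → Fin n → ℝ) (A : (Fin n → ℝ) → Fin n → Fin n → ℝ)
    (hQ : ContDiff ℝ (⊤ : ℕ∞) Q) (hA : ∀ a b, ContDiff ℝ (⊤ : ℕ∞) (fun q => A q a b))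
    (lam : ℝ) (hlam : lam ≠ 0)
    (C : (Fin n → ℝ) → Fin n → Fin n → ℝ) (hC : IsKillingTensor C)
    (L : (Fin n → ℝ) → Fin n → ℝ) (hLsm : ContDiff ℝ (⊤ : ℕ∞) L)
    -- `λ C_{ab} = −½(∂L_a/∂q^b + ∂L_b/∂q^a) − (C_{ca} A^c_b + C_{cb} A^c_a)`
    (h1 : ∀ q, ∀ a b : Fin n, lam * C q a b =
      -((1 / 2) * (dS (fun q => L q a) b q + dS (fun q => L q b) a q))
        - ((∑ c, C q c a * A q c b) + (∑ c, C q c b * A q c a)))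
    -- `(L_b Q^b)_{,a} = 2λ C_{ab} Q^b − λ² L_a − λ L_b A^b_a`
    (h2 : ∀ q, ∀ a : Fin n, dS (fun q => ∑ b, L q b * Q q b) a q =
      2 * lam * (∑ b, C q a b * Q q b) - lam ^ 2 * L q a - lam * ∑ b, L q b * A q b a)
    -- a solution of the dynamical equations
    (q : ℝ → Fin n → ℝ) (hq : ContDiff ℝ (⊤ : ℕ∞) q)
    (hode : ∀ t, ∀ a : Fin n, deriv (fun s => deriv (fun u => q u a) s) t
      = -(Q (q t) a) + ∑ b, A (q t) a b * deriv (fun u => q u b) t) :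
    -- `J₂` is constant in `t`
    ∃ cst : ℝ, ∀ t : ℝ,
      Real.exp (lam * t) *
        (lam * (∑ a, ∑ b, C (q t) a b * deriv (fun u => q u a) t * deriv (fun u => q u b) t)
          + lam * (∑ a, L (q t) a * deriv (fun u => q u a) t)
          + (∑ a, L (q t) a * Q (q t) a))
      = cst := by
  obtain ⟨hCsm, hCsym, hKillP⟩ := hC
  -- differentiability of the fields
  have hQa : ∀ a, Differentiable ℝ fun x => Q x a :=
    fun a => (contDiff_pi.mp hQ a).differentiable (by simp)
  have hLa : ∀ a, Differentiable ℝ fun x => L x a :=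
    fun a => (contDiff_pi.mp hLsm a).differentiable (by simp)
  have hCab : ∀ a b, Differentiable ℝ fun x => C x a b :=
    fun a b => (hCsm a b).differentiable (by simp)
  have hLQ : Differentiable ℝ fun x => ∑ b, L x b * Q x b :=
    Differentiable.fun_sum fun b _ => (hLa b).mul (hQa b)
  -- velocities
  have hqa : ∀ a, ContDiff ℝ (⊤ : ℕ∞) fun u => q u a := fun a => contDiff_pi.mp hq a
  have hqv : ∀ t, HasDerivAt q (fun a => deriv (fun u => q u a) t) t := fun t =>
    hasDerivAt_pi.mpr fun a => ((hqa a).differentiable (by simp) t).hasDerivAt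
  have hvel : ∀ (t : ℝ) (a : Fin n), HasDerivAt (fun s => deriv (fun u => q u a) s)
      (-(Q (q t) a) + ∑ b, A (q t) a b * deriv (fun u => q u b) t) t := by
    intro t a
    have h1' : ContDiff ℝ ((⊤ : ℕ∞) : WithTop ℕ∞) fun u => q u a := (hqa a).of_le (by simp)
    have hsm : Differentiable ℝ fun s => deriv (fun u => q u a) s :=
      (contDiff_infty_iff_deriv.mp h1').2.differentiable (by simp)
    have hd := (hsm t).hasDerivAt
    rwa [hode t a] at hd
  have hcomp : ∀ (f : (Fin n → ℝ) → ℝ), Differentiable ℝ f → ∀ t,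
      HasDerivAt (fun s => f (q s))
        (∑ c, dS f c (q t) * deriv (fun u => q u c) t) t :=
    fun f hf t => hasDerivAt_comp_sum f hf q t _ (hqv t)
  -- the conserved quantity
  set F : ℝ → ℝ := fun s => Real.exp (lam * s) *
    (lam * (∑ a, ∑ b, C (q s) a b * deriv (fun u => q u a) s * deriv (fun u => q u b) s)
      + lam * (∑ a, L (q s) a * deriv (fun u => q u a) s)
      + (∑ a, L (q s) a * Q (q s) a)) with hF
  have hFderiv : ∀ t, HasDerivAt F 0 t := by
    intro t
    set u : Fin n → ℝ := fun a => deriv (fun u => q u a) t with hu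
    set x : Fin n → ℝ := q t with hx
    -- derivative of the quadratic sum
    have hquad : HasDerivAt
        (fun s => ∑ a, ∑ b, C (q s) a b * deriv (fun u => q u a) s * deriv (fun u => q u b) s)
        (∑ a, ∑ b, (((∑ c, dS (fun y => C y a b) c x * u c) * u a
            + C x a b * (-(Q x a) + ∑ c, A x a c * u c)) * u b
          + (C x a b * u a) * (-(Q x b) + ∑ c, A x b c * u c))) t := by
      refine HasDerivAt.fun_sum fun a _ => HasDerivAt.fun_sum fun b _ => ?_
      exact ((hcomp (fun y => C y a b) (hCab a b) t).mul (hvel t a)).mul (hvel t b)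
    have hlin : HasDerivAt (fun s => ∑ a, L (q s) a * deriv (fun u => q u a) s)
        (∑ a, ((∑ c, dS (fun y => L y a) c x * u c) * u a
          + L x a * (-(Q x a) + ∑ c, A x a c * u c))) t := by
      refine HasDerivAt.fun_sum fun a _ => ?_
      exact (hcomp (fun y => L y a) (hLa a) t).mul (hvel t a)
    have hlq : HasDerivAt (fun s => ∑ a, L (q s) a * Q (q s) a)
        (∑ a, dS (fun y => ∑ b, L y b * Q y b) a x * u a) t := by
      exact hcomp (fun y => ∑ b, L y b * Q y b) hLQ t
    have hJ : HasDerivAt (fun s =>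
        lam * (∑ a, ∑ b, C (q s) a b * deriv (fun u => q u a) s * deriv (fun u => q u b) s)
          + lam * (∑ a, L (q s) a * deriv (fun u => q u a) s)
          + (∑ a, L (q s) a * Q (q s) a))
        (lam * (∑ a, ∑ b, (((∑ c, dS (fun y => C y a b) c x * u c) * u a
            + C x a b * (-(Q x a) + ∑ c, A x a c * u c)) * u b
          + (C x a b * u a) * (-(Q x b) + ∑ c, A x b c * u c)))
         + lam * (∑ a, ((∑ c, dS (fun y => L y a) c x * u c) * u a
            + L x a * (-(Q x a) + ∑ c, A x a c * u c)))
         + ∑ a, dS (fun y => ∑ b, L y b * Q y b) a x * u a) t :=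
      ((hquad.const_mul lam).add (hlin.const_mul lam)).add hlq
    have hE : HasDerivAt (fun s => Real.exp (lam * s)) (Real.exp (lam * t) * lam) t := by
      simpa using ((hasDerivAt_id t).const_mul lam).exp
    have hprod := hE.mul hJ
    -- the Killing contraction vanishes
    have hKillSum : ∑ a, ∑ b, (∑ c, dS (fun y => C y a b) c x * u c) * u a * u b = 0 := by
      set P : Fin n → Fin n → Fin n → ℝ := fun a b c => dS (fun y => C y a b) c x with hP
      have expand : ∀ a b : Fin n, (∑ c, P a b c * u c) * u a * u b
          = ∑ c, P a b c * (u a * u b * u c) := by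
        intro a b; rw [Finset.sum_mul, Finset.sum_mul]
        exact sum1_congr fun c => by ring
      rw [sum2_congr expand]
      set T := ∑ a, ∑ b, ∑ c, P a b c * (u a * u b * u c) with hT
      have c1 : T = ∑ a, ∑ b, ∑ c, P c a b * (u a * u b * u c) := by
        rw [hT]
        calc ∑ a, ∑ b, ∑ c, P a b c * (u a * u b * u c)
            = ∑ a, ∑ b, ∑ c, P b a c * (u b * u a * u c) := sum3_swap12 _
          _ = ∑ a, ∑ b, ∑ c, P c a b * (u c * u a * u b) :=
              sum3_swap23 (fun a b c => P b a c * (u b * u a * u c))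
          _ = ∑ a, ∑ b, ∑ c, P c a b * (u a * u b * u c) :=
              sum2_congr fun a b => sum1_congr fun c => by ring
      have c2 : T = ∑ a, ∑ b, ∑ c, P b c a * (u a * u b * u c) := by
        rw [hT]
        calc ∑ a, ∑ b, ∑ c, P a b c * (u a * u b * u c)
            = ∑ a, ∑ b, ∑ c, P a c b * (u a * u c * u b) :=
              sum3_swap23 (fun a b c => P a b c * (u a * u b * u c))
          _ = ∑ a, ∑ b, ∑ c, P b c a * (u b * u c * u a) :=
              sum3_swap12 (fun a b c => P a c b * (u a * u c * u b))
          _ = ∑ a, ∑ b, ∑ c, P b c a * (u a * u b * u c) :=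
              sum2_congr fun a b => sum1_congr fun c => by ring
      have hsum3 : T + T + T = 0 := by
        nth_rewrite 2 [c2]
        nth_rewrite 2 [c1]
        rw [hT]
        have : ∀ a b c : Fin n, P a b c * (u a * u b * u c) + P b c a * (u a * u b * u c)
            + P c a b * (u a * u b * u c)
            = (P a b c + P b c a + P c a b) * (u a * u b * u c) := fun a b c => by ring
        rw [show (∑ a, ∑ b, ∑ c, P a b c * (u a * u b * u c))
              + (∑ a, ∑ b, ∑ c, P b c a * (u a * u b * u c))
              + (∑ a, ∑ b, ∑ c, P c a b * (u a * u b * u c))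
            = ∑ a, ∑ b, ∑ c, ((P a b c + P b c a + P c a b) * (u a * u b * u c)) from by
          simp only [← this]
          simp [Finset.sum_add_distrib]]
        have hz : ∀ a b c : Fin n, P a b c + P b c a + P c a b = 0 := fun a b c => hKillP x a b c
        simp only [hz, zero_mul, Finset.sum_const_zero]
      linarith
    -- the main algebraic cancellation
    have hzero := key_algebra lam (fun a b => C x a b) (fun a b => A x a b)
      (fun a b => ∑ c, dS (fun y => C y a b) c x * u c)
      (fun a b => dS (fun y => L y a) b x)
      (fun a => L x a) (fun a => Q x a) u
      (fun a => dS (fun y => ∑ b, L y b * Q y b) a x)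
      (fun a b => hCsym x a b) hKillSum (fun a b => h1 x a b) (fun a => h2 x a)
    have : HasDerivAt F (Real.exp (lam * t) * lam *
        (lam * (∑ a, ∑ b, C x a b * u a * u b) + lam * (∑ a, L x a * u a)
          + ∑ a, L x a * Q x a)
      + Real.exp (lam * t) *
        (lam * (∑ a, ∑ b, (((∑ c, dS (fun y => C y a b) c x * u c) * u a
            + C x a b * (-(Q x a) + ∑ c, A x a c * u c)) * u b
          + (C x a b * u a) * (-(Q x b) + ∑ c, A x b c * u c)))
         + lam * (∑ a, ((∑ c, dS (fun y => L y a) c x * u c) * u a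
            + L x a * (-(Q x a) + ∑ c, A x a c * u c)))
         + ∑ a, dS (fun y => ∑ b, L y b * Q y b) a x * u a)) t := hprod
    have heq : (Real.exp (lam * t) * lam *
        (lam * (∑ a, ∑ b, C x a b * u a * u b) + lam * (∑ a, L x a * u a)
          + ∑ a, L x a * Q x a)
      + Real.exp (lam * t) *
        (lam * (∑ a, ∑ b, (((∑ c, dS (fun y => C y a b) c x * u c) * u a
            + C x a b * (-(Q x a) + ∑ c, A x a c * u c)) * u b
          + (C x a b * u a) * (-(Q x b) + ∑ c, A x b c * u c)))
         + lam * (∑ a, ((∑ c, dS (fun y => L y a) c x * u c) * u a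
            + L x a * (-(Q x a) + ∑ c, A x a c * u c)))
         + ∑ a, dS (fun y => ∑ b, L y b * Q y b) a x * u a)) = 0 := by
      rw [show ∀ X Y : ℝ, Real.exp (lam * t) * lam * X + Real.exp (lam * t) * Y
          = Real.exp (lam * t) * (lam * X + Y) from fun X Y => by ring]
      rw [hzero, mul_zero]
    rwa [heq] at this
  refine ⟨F 0, fun t => ?_⟩
  exact is_const_of_deriv_eq_zero (fun s => (hFderiv s).differentiableAt)
    (fun s => (hFderiv s).deriv) t 0
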